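/- Let X be a metric space, let μ be a Borel probability measure on X, and let x₁, x₂ ∈ X with x₂ ∈ supp(μ). Define, for ε > 0, R°(ε) := μ(B(x₁,ε))/μ(B(x₂,ε)) using open balls and R̄(ε) := μ(B̄(x₁,ε))/μ(B̄(x₂,ε)) using closed balls. Then lim_{ε→0} R̄(ε) exists (in ℝ) if and only if lim_{ε→0} R°(ε) exists, in which case the two limits are equal. -/

import Mathlib

open MeasureTheory Metric Filter Set Topology ENNReal

noncomputable section

/-- The topological support of a Borel measure on a metric space: the set of points all of
whose open balls have positive measure. -/
def measureSupport {X : Type*} [PseudoMetricSpace X] [MeasurableSpace X]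
    (μ : Measure X) : Set X :=
  {x | ∀ r > 0, 0 < μ (Metric.ball x r)}

/-- `I` is an Onsager--Machlup functional for `μ` on `E`: for all `x₁ x₂ ∈ E`, the ratio of
small-ball probabilities tends to `exp (I x₂ - I x₁)` as the radius tends to `0⁺`. -/
def IsOMFunctional {X : Type*} [PseudoMetricSpace X] [MeasurableSpace X]
    (μ : Measure X) (E : Set X) (I : X → ℝ) : Prop :=
  ∀ x₁ ∈ E, ∀ x₂ ∈ E,
    Filter.Tendsto (fun r : ℝ => μ (Metric.ball x₁ r) / μ (Metric.ball x₂ r))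
      (𝓝[>] 0) (𝓝 (ENNReal.ofReal (Real.exp (I x₂ - I x₁))))

/-- Property `M(μ, E)`: there is `x⋆ ∈ E` such that for every `x ∉ E` the small-ball
probability ratio `μ(B(x,r)) / μ(B(x⋆,r))` tends to `0` as `r → 0⁺`. -/
def PropertyM {X : Type*} [PseudoMetricSpace X] [MeasurableSpace X]
    (μ : Measure X) (E : Set X) : Prop :=
  ∃ xs ∈ E, ∀ x ∉ E,
    Filter.Tendsto (fun r : ℝ => μ (Metric.ball x r) / μ (Metric.ball xs r)) (𝓝[>] 0) (𝓝 0)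

/-! For `ε > 0` the closed-ball ratio at `ε` is the right limit of the open-ball ratio (continuity
of `μ` from above along `⋂ r > ε, ball x r = closedBall x ε`), and the open-ball ratio at `ε` is the
left limit of the closed-ball ratio (continuity from below along `⋃ r < ε, closedBall x r =
ball x ε`); the denominators stay positive because `x₂` lies in the support. A function whose
values are limits of another one at nearby points inherits every limit of it at `0⁺`. -/

/-- Works because closed neighbourhoods of `b` form a basis and `g a` is a limit of `f` near `a`. -/
theorem Filter.Tendsto.of_nearby_limits {α β : Type*} [TopologicalSpace α] [TopologicalSpace β]
    [RegularSpace β] {f g : α → β} {s : Set α} {x : α} {b : β} {l : α → Filter α}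
    [∀ a, (l a).NeBot] (hs : IsOpen s) (hl : ∀ a, l a ≤ 𝓝 a)
    (hf : Tendsto f (𝓝[s] x) (𝓝 b)) (hg : ∀ a ∈ s, Tendsto f (l a) (𝓝 (g a))) :
    Tendsto g (𝓝[s] x) (𝓝 b) := by
  rw [(closed_nhds_basis b).tendsto_right_iff]
  rintro U ⟨hU, hUc⟩
  filter_upwards [eventually_eventually_nhdsWithin.2 (hf hU), self_mem_nhdsWithin] with a ha has
  rw [nhdsWithin_eq_nhds.2 (hs.mem_nhds has)] at ha
  exact hUc.mem_of_tendsto (hg a has) (hl a ha)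

namespace MeasureTheory

theorem tendsto_measure_biUnion_lt {α ι : Type*} [MeasurableSpace α] {μ : Measure α}
    [LinearOrder ι] [TopologicalSpace ι] [OrderTopology ι] [FirstCountableTopology ι]
    [DenselyOrdered ι] {s : ι → Set α} {a : ι} (hm : ∀ i j, i ≤ j → j < a → s i ⊆ s j) :
    Tendsto (μ ∘ s) (𝓝[<] a) (𝓝 (μ (⋃ r < a, s r))) := by
  have : (atTop : Filter (Iio a)).IsCountablyGenerated := by
    rw [← comap_coe_Iio_nhdsLT a]
    infer_instance
  simp_rw [← map_coe_Iio_atTop a, tendsto_map'_iff, ← mem_Iio, biUnion_eq_iUnion]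
  exact tendsto_measure_iUnion_atTop fun i j h ↦ hm i j h j.2

variable {X : Type*} [PseudoMetricSpace X] [MeasurableSpace X] (μ : Measure X) (x : X) (r : ℝ)

theorem tendsto_measure_closedBall_nhdsLT :
    Tendsto (fun δ ↦ μ (closedBall x δ)) (𝓝[<] r) (𝓝 (μ (ball x r))) := by
  rw [← biUnion_lt_closedBall x r]
  exact tendsto_measure_biUnion_lt fun i j h _ ↦ closedBall_subset_closedBall h

theorem tendsto_measure_ball_nhdsGT [OpensMeasurableSpace X] [IsFiniteMeasure μ] :
    Tendsto (fun δ ↦ μ (ball x δ)) (𝓝[>] r) (𝓝 (μ (closedBall x r))) := by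
  rw [← biInter_gt_ball x r]
  exact tendsto_measure_biInter_gt (fun _ _ ↦ measurableSet_ball.nullMeasurableSet)
    (fun _ _ _ h ↦ ball_subset_ball h) ⟨r + 1, by linarith, measure_ne_top _ _⟩

end MeasureTheory

theorem lim_closed_ball_ratio_iff_lim_open_ball_ratio
    {X : Type*} [MetricSpace X] [MeasurableSpace X] [BorelSpace X]
    (μ : Measure X) [IsProbabilityMeasure μ]
    (x₁ x₂ : X) (hx₂ : x₂ ∈ measureSupport μ) :
    ∀ L : ℝ≥0∞,
      Filter.Tendsto
          (fun ε : ℝ => μ (Metric.closedBall x₁ ε) / μ (Metric.closedBall x₂ ε))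
          (𝓝[>] 0) (𝓝 L)
        ↔ Filter.Tendsto
          (fun ε : ℝ => μ (Metric.ball x₁ ε) / μ (Metric.ball x₂ ε))
          (𝓝[>] 0) (𝓝 L) := by
  intro L
  have hball : ∀ ε > 0, μ (ball x₂ ε) ≠ 0 := fun ε hε ↦ (hx₂ ε hε).ne'
  have hclosedBall : ∀ ε > 0, μ (closedBall x₂ ε) ≠ 0 := fun ε hε ↦
    ((hx₂ ε hε).trans_le (measure_mono ball_subset_closedBall)).ne'
  refine ⟨fun h ↦ ?_, fun h ↦ ?_⟩
  · refine h.of_nearby_limits (l := fun ε ↦ 𝓝[<] ε) isOpen_Ioi (fun _ ↦ nhdsWithin_le_nhds)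
      fun ε hε ↦ ?_
    exact ENNReal.Tendsto.div (tendsto_measure_closedBall_nhdsLT μ x₁ ε) (.inr (hball ε hε))
      (tendsto_measure_closedBall_nhdsLT μ x₂ ε) (.inl (measure_ne_top _ _))
  · refine h.of_nearby_limits (l := fun ε ↦ 𝓝[>] ε) isOpen_Ioi (fun _ ↦ nhdsWithin_le_nhds)
      fun ε hε ↦ ?_
    exact ENNReal.Tendsto.div (tendsto_measure_ball_nhdsGT μ x₁ ε) (.inr (hclosedBall ε hε))
      (tendsto_measure_ball_nhdsGT μ x₂ ε) (.inl (measure_ne_top _ _))
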